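/- Let m₁, m₂ ∈ ℝ, let e₁ := (1,0), and for q ∈ ℝ² \ {e₁, −e₁} and p ∈ ℝ² define L₊ := (q₁ − 1)p₂ − q₂p₁, L₋ := (q₁ + 1)p₂ − q₂p₁, and Ω(q,p) := L₊·L₋ − 2m₁(q₁ − 1)/‖q − e₁‖ + 2m₂(q₁ + 1)/‖q + e₁‖. Then: (i) for every twice-differentiable curve q : I → ℝ² \ {e₁, −e₁} satisfying the two-center equation q''(t) = −m₁·(q(t) − e₁)/‖q(t) − e₁‖³ − m₂·(q(t) + e₁)/‖q(t) + e₁‖³, the function t ↦ Ω(q(t), q'(t)) is constant; (ii) for every b > 0 and every point q on the confocal ellipse {q₁²/(b²+1) + q₂²/b² = 1}, the elastic reflection p' of any p ∈ ℝ² at this ellipse at q (with normal n = (q₁/(b²+1), q₂/b²)) satisfies Ω(q,p') = Ω(q,p); (iii) for all A, B > 0 with A² + B² = 1 and every point q ≠ ±e₁ on the confocal hyperbola {q₁²/A² − q₂²/B² = 1}, the elastic reflection p' of any p at this hyperbola at q (with normal n = (q₁/A², −q₂/B²)) satisfies Ω(q,p') = Ω(q,p). Hence Euler's two-center problem admits any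 combination of confocal ellipses and hyperbolae (with foci at the two centers (±1,0)) as an integrable reflection wall. -/

import Mathlib

/-!
`Ω = L₊ L₋ - 2 m₁ cos θ₊ + 2 m₂ cos θ₋`, where `θ±` is the polar angle of `q` seen from `±e₁`.
Along a trajectory only the center `∓e₁` exerts a torque about `±e₁`, and the resulting change
of `L₊ L₋` is cancelled exactly by the change of the two cosine terms.

At a wall the cosine terms depend on `q` only, and `p ↦ L₊ L₋` is a quadratic form `K`. A
reflection in the line of `n` preserves a quadratic form as soon as `n` and its rotation `n⊥` are
`K`-conjugate. For a conic with foci `±e₁` this conjugacy is the reflection property of the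
conic: its normal bisects the angle between the two focal radii.
-/

/-- The first integral
`Ω(q,p) = L₊·L₋ − 2m₁(q₁−1)/‖q−e₁‖ + 2m₂(q₁+1)/‖q+e₁‖` of Euler's two-center
problem, where `L₊ = (q₁−1)p₂ − q₂p₁` and `L₋ = (q₁+1)p₂ − q₂p₁` are the angular
momenta about the two centers `(±1, 0)`. -/
noncomputable def twoCenterOmega (m₁ m₂ : ℝ) (q p : ℝ × ℝ) : ℝ :=
  ((q.1 - 1) * p.2 - q.2 * p.1) * ((q.1 + 1) * p.2 - q.2 * p.1)
    - 2 * m₁ * (q.1 - 1) / Real.sqrt ((q.1 - 1) ^ 2 + q.2 ^ 2)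
    + 2 * m₂ * (q.1 + 1) / Real.sqrt ((q.1 + 1) ^ 2 + q.2 ^ 2)

open QuadraticMap

noncomputable def elasticReflection (n p : ℝ × ℝ) : ℝ × ℝ :=
  p - (2 * ((p.1 * n.1 + p.2 * n.2) / (n.1 ^ 2 + n.2 ^ 2))) • n

theorem QuadraticMap.map_elasticReflection (Q : QuadraticForm ℝ (ℝ × ℝ)) {n : ℝ × ℝ}
    (h : polar Q n (-n.2, n.1) = 0) (p : ℝ × ℝ) : Q (elasticReflection n p) = Q p := by
  set N := n.1 ^ 2 + n.2 ^ 2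
  set s := p.1 * n.1 + p.2 * n.2
  have hrefl : elasticReflection n p = p + (-(2 * (s / N))) • n := by
    rw [elasticReflection, neg_smul, ← sub_eq_add_neg]
  rcases eq_or_ne N 0 with hN | hN
  · simp [hrefl, hN]
  have hdecomp : N • p = s • n + (p.2 * n.1 - p.1 * n.2) • (-n.2, n.1) := by
    ext <;> simp [N, s] <;> ring
  have hpolar : N * polar Q p n = 2 * s * Q n := by
    rw [← smul_eq_mul, ← polar_smul_left, hdecomp, polar_add_left, polar_smul_left,
      polar_smul_left, polar_self, polar_comm _ (-n.2, n.1), h]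
    simp only [nsmul_eq_mul, smul_eq_mul]
    ring
  calc Q (elasticReflection n p)
      = Q p + ((2 * (s / N)) ^ 2 * Q n - 2 * (s / N) * polar Q p n) := by
        rw [hrefl, QuadraticMap.map_add Q, QuadraticMap.map_smul, polar_smul_right]
        simp only [smul_eq_mul]
        ring
    _ = Q p := by
        field_simp
        linear_combination (-(2 * s)) * hpolar

theorem Convex.is_const_of_hasDerivWithinAt_zero {E : Type*} [NormedAddCommGroup E]
    [NormedSpace ℝ E] {f : ℝ → E} {s : Set ℝ} (hs : Convex ℝ s)
    (hf : ∀ x ∈ s, HasDerivWithinAt f 0 s x) {x y : ℝ} (hx : x ∈ s) (hy : y ∈ s) :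
    f x = f y := by
  simpa [sub_eq_zero, eq_comm] using
    hs.norm_image_sub_le_of_norm_hasDerivWithin_le (C := 0) hf (fun _ _ => by simp) hx hy

def angularMomentum (c : ℝ) (q : ℝ × ℝ) : (ℝ × ℝ) →ₗ[ℝ] ℝ :=
  (q.1 - c) • LinearMap.snd ℝ ℝ ℝ - q.2 • LinearMap.fst ℝ ℝ ℝ

@[simp]
theorem angularMomentum_apply (c : ℝ) (q p : ℝ × ℝ) :
    angularMomentum c q p = (q.1 - c) * p.2 - q.2 * p.1 := rfl

noncomputable def focalCos (c : ℝ) (q : ℝ × ℝ) : ℝ :=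
  (q.1 - c) / √((q.1 - c) ^ 2 + q.2 ^ 2)

theorem twoCenterOmega_eq (m₁ m₂ : ℝ) (q p : ℝ × ℝ) :
    twoCenterOmega m₁ m₂ q p = angularMomentum 1 q p * angularMomentum (-1) q p
      - 2 * m₁ * focalCos 1 q + 2 * m₂ * focalCos (-1) q := by
  simp only [twoCenterOmega, angularMomentum_apply, focalCos, sub_neg_eq_add, mul_div_assoc]

noncomputable def twoCenterForce (m₁ m₂ : ℝ) (q : ℝ × ℝ) : ℝ × ℝ :=
  (-(m₁ / √((q.1 - 1) ^ 2 + q.2 ^ 2) ^ 3)) • (q - ((1 : ℝ), (0 : ℝ)))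
    - (m₂ / √((q.1 + 1) ^ 2 + q.2 ^ 2) ^ 3) • (q + ((1 : ℝ), (0 : ℝ)))

theorem sq_add_sq_pos_of_ne {c : ℝ} {q : ℝ × ℝ} (h : q ≠ (c, 0)) :
    0 < (q.1 - c) ^ 2 + q.2 ^ 2 := by
  refine (by positivity : (0 : ℝ) ≤ _).lt_of_ne fun h0 => h ?_
  have h0' : (q.1 - c) * (q.1 - c) + q.2 * q.2 = 0 := by linear_combination -h0
  obtain ⟨h1, h2⟩ := mul_self_add_mul_self_eq_zero.mp h0'
  exact Prod.ext (sub_eq_zero.mp h1) h2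

section Derivatives

variable {I : Set ℝ} {t : ℝ}

theorem HasDerivWithinAt.fst {f : ℝ → ℝ × ℝ} {f' : ℝ × ℝ} (h : HasDerivWithinAt f f' I t) :
    HasDerivWithinAt (fun s => (f s).1) f'.1 I t := by
  simpa using h.hasFDerivWithinAt.fst.hasDerivWithinAt

theorem HasDerivWithinAt.snd {f : ℝ → ℝ × ℝ} {f' : ℝ × ℝ} (h : HasDerivWithinAt f f' I t) :
    HasDerivWithinAt (fun s => (f s).2) f'.2 I t := by
  simpa using h.hasFDerivWithinAt.snd.hasDerivWithinAt

variable {q v : ℝ → ℝ × ℝ}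

theorem hasDerivWithinAt_angularMomentum (c : ℝ) {a : ℝ × ℝ}
    (hq : HasDerivWithinAt q (v t) I t) (hv : HasDerivWithinAt v a I t) :
    HasDerivWithinAt (fun s => angularMomentum c (q s) (v s)) (angularMomentum c (q t) a) I t := by
  refine (((hq.fst.sub_const c).mul hv.snd).sub (hq.snd.mul hv.fst)).congr_deriv ?_
  simp only [angularMomentum_apply]
  ring

theorem hasDerivWithinAt_focalCos {c : ℝ} {w : ℝ × ℝ} (hc : q t ≠ (c, 0))
    (hq : HasDerivWithinAt q w I t) :
    HasDerivWithinAt (fun s => focalCos c (q s))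
      (-(q t).2 * angularMomentum c (q t) w / √(((q t).1 - c) ^ 2 + (q t).2 ^ 2) ^ 3) I t := by
  have hpos := sq_add_sq_pos_of_ne hc
  have hr := (((hq.fst.sub_const c).pow 2).add (hq.snd.pow 2)).sqrt hpos.ne'
  refine ((hq.fst.sub_const c).div hr (Real.sqrt_pos.mpr hpos).ne').congr_deriv ?_
  have hsq := Real.sq_sqrt hpos.le
  have hr0 := (Real.sqrt_pos.mpr hpos).ne'
  simp only [Pi.add_apply, Pi.pow_apply, angularMomentum_apply, Nat.cast_ofNat] at hsq hr0 ⊢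
  set r := √(((q t).1 - c) ^ 2 + (q t).2 ^ 2)
  field_simp
  linear_combination w.1 * hsq

theorem hasDerivWithinAt_twoCenterOmega (m₁ m₂ : ℝ) (h₁ : q t ≠ (1, 0)) (h₂ : q t ≠ (-1, 0))
    (hq : HasDerivWithinAt q (v t) I t)
    (hv : HasDerivWithinAt v (twoCenterForce m₁ m₂ (q t)) I t) :
    HasDerivWithinAt (fun s => twoCenterOmega m₁ m₂ (q s) (v s)) 0 I t := by
  have H := (((hasDerivWithinAt_angularMomentum 1 hq hv).mul
    (hasDerivWithinAt_angularMomentum (-1) hq hv)).sub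
      ((hasDerivWithinAt_focalCos h₁ hq).const_mul (2 * m₁))).add
        ((hasDerivWithinAt_focalCos h₂ hq).const_mul (2 * m₂))
  simp only [twoCenterOmega_eq]
  refine H.congr_deriv ?_
  simp only [twoCenterForce, angularMomentum_apply, Prod.fst_sub, Prod.snd_sub, Prod.fst_add,
    Prod.snd_add, Prod.smul_fst, Prod.smul_snd, smul_eq_mul, sub_neg_eq_add]
  ring

end Derivatives

theorem polar_angularMomentum_confocal {a c : ℝ} (ha : a ≠ 0) (hc : c ≠ 0) (hac : a - c = 1)
    {q : ℝ × ℝ} (hq : q.1 ^ 2 / a + q.2 ^ 2 / c = 1) :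
    polar (linMulLin (angularMomentum 1 q) (angularMomentum (-1) q))
      (q.1 / a, q.2 / c) (-(q.2 / c), q.1 / a) = 0 := by
  obtain rfl : c = a - 1 := by linarith
  simp only [polar, linMulLin_apply, angularMomentum_apply, Prod.fst_add, Prod.snd_add]
  field_simp at hq ⊢
  linear_combination 2 * q.1 * q.2 * hq

theorem twoCenterOmega_elasticReflection_confocal (m₁ m₂ : ℝ) {a c : ℝ} (ha : a ≠ 0)
    (hc : c ≠ 0) (hac : a - c = 1) {q : ℝ × ℝ} (hq : q.1 ^ 2 / a + q.2 ^ 2 / c = 1)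
    (p : ℝ × ℝ) :
    twoCenterOmega m₁ m₂ q (elasticReflection (q.1 / a, q.2 / c) p) = twoCenterOmega m₁ m₂ q p := by
  have hK := (linMulLin (angularMomentum 1 q) (angularMomentum (-1) q)).map_elasticReflection
    (polar_angularMomentum_confocal ha hc hac hq) p
  simp only [linMulLin_apply] at hK
  rw [twoCenterOmega_eq, twoCenterOmega_eq, hK]

/-- Euler's two-center problem with centers `(±1,0)` admits any combination of
confocal ellipses `{q₁²/(b²+1) + q₂²/b² = 1}` and confocal hyperbolae
`{q₁²/A² − q₂²/B² = 1}` (A² + B² = 1), with foci at the two centers, as an integrable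
reflection wall: `Ω` is constant along two-center trajectories and invariant under
elastic reflections at these conics. -/
theorem stmt_19 (m₁ m₂ : ℝ) :
    (∀ I : Set ℝ, Convex ℝ I → ∀ q v : ℝ → ℝ × ℝ,
      (∀ t ∈ I, q t ≠ ((1 : ℝ), (0 : ℝ)) ∧ q t ≠ ((-1 : ℝ), (0 : ℝ))) →
      (∀ t ∈ I, HasDerivWithinAt q (v t) I t) →
      (∀ t ∈ I, HasDerivWithinAt v
        ((-(m₁ / Real.sqrt (((q t).1 - 1) ^ 2 + (q t).2 ^ 2) ^ 3))
            • (q t - ((1 : ℝ), (0 : ℝ)))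
          - (m₂ / Real.sqrt (((q t).1 + 1) ^ 2 + (q t).2 ^ 2) ^ 3)
            • (q t + ((1 : ℝ), (0 : ℝ)))) I t) →
      ∀ t ∈ I, ∀ t' ∈ I,
        twoCenterOmega m₁ m₂ (q t) (v t) = twoCenterOmega m₁ m₂ (q t') (v t')) ∧
    (∀ b : ℝ, 0 < b → ∀ q p : ℝ × ℝ,
      q.1 ^ 2 / (b ^ 2 + 1) + q.2 ^ 2 / b ^ 2 = 1 →
      ∀ n p' : ℝ × ℝ, n = (q.1 / (b ^ 2 + 1), q.2 / b ^ 2) →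
      p' = p - (2 * ((p.1 * n.1 + p.2 * n.2) / (n.1 ^ 2 + n.2 ^ 2))) • n →
      twoCenterOmega m₁ m₂ q p' = twoCenterOmega m₁ m₂ q p) ∧
    (∀ A B : ℝ, 0 < A → 0 < B → A ^ 2 + B ^ 2 = 1 → ∀ q p : ℝ × ℝ,
      q ≠ ((1 : ℝ), (0 : ℝ)) → q ≠ ((-1 : ℝ), (0 : ℝ)) →
      q.1 ^ 2 / A ^ 2 - q.2 ^ 2 / B ^ 2 = 1 →
      ∀ n p' : ℝ × ℝ, n = (q.1 / A ^ 2, -q.2 / B ^ 2) →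
      p' = p - (2 * ((p.1 * n.1 + p.2 * n.2) / (n.1 ^ 2 + n.2 ^ 2))) • n →
      twoCenterOmega m₁ m₂ q p' = twoCenterOmega m₁ m₂ q p) := by
  refine ⟨fun I hI q v hne hq hv t ht t' ht' => ?_, fun b hb q p hconic n p' hn hp' => ?_,
    fun A B hA hB hAB q p _ _ hconic n p' hn hp' => ?_⟩
  · exact hI.is_const_of_hasDerivWithinAt_zero (fun s hs => hasDerivWithinAt_twoCenterOmega m₁ m₂
      (hne s hs).1 (hne s hs).2 (hq s hs) (hv s hs)) ht ht'
  · subst hn hp'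
    exact twoCenterOmega_elasticReflection_confocal m₁ m₂ (by positivity) (by positivity)
      (by ring) hconic p
  · subst hn hp'
    rw [neg_div, ← div_neg]
    -- the hyperbola is the member `c = -B²` of the confocal family `x²/(c + 1) + y²/c = 1`
    refine twoCenterOmega_elasticReflection_confocal m₁ m₂ (by positivity)
      (neg_ne_zero.mpr (by positivity)) (by linarith) ?_ p
    rwa [div_neg, ← sub_eq_add_neg]
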